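/- Let a > 0, m, m' ∈ ℤ, n, n' ∈ ℕ. Define Ψ_{nm}^a(r, θ) = 𝒥_{nm}^a(r) · (1/√(2π)) e^{imθ}, where 𝒥_{nm}^a(r) = J_m(z_{mn} r / a)/√(N_n^{(m)}(a)) and z_{mn} is the n-th positive zero of J_m and N_n^{(m)}(a) = (a²/2)J_{m+1}(z_{mn})². Then ∫₀^a ∫₀^{2π} Ψ_{nm}^a(r,θ) conj(Ψ_{n'm'}^a(r,θ)) r dr dθ = δ_{nn'} δ_{mm'}. -/

import Mathlib

open MeasureTheory

/-- The Bessel function of the first kind of integer order `m`, via Bessel's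
integral representation `J_m(x) = (1/π) ∫₀^π cos (m τ − x sin τ) dτ`. -/
noncomputable def besselJ (m : ℤ) (x : ℝ) : ℝ :=
  (1 / Real.pi) * ∫ τ in (0:ℝ)..Real.pi, Real.cos (m * τ - x * Real.sin τ)

/-- The polar harmonic basis function
`Ψ_{nm}^a(r,θ) = (J_m(z_{mn} r/a)/√(N_n^{(m)}(a))) ⋅ (1/√(2π)) e^{imθ}`
with `N_n^{(m)}(a) = (a²/2) J_{m+1}(z_{mn})²`, where `z m n` is the `n`-th
positive zero of `J_m` (indexed from `n = 0`). -/
noncomputable def polarHarmonic (a : ℝ) (z : ℤ → ℕ → ℝ) (m : ℤ) (n : ℕ)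
    (r θ : ℝ) : ℂ :=
  ((besselJ m (z m n * r / a)
      / Real.sqrt (a ^ 2 / 2 * besselJ (m + 1) (z m n) ^ 2) : ℝ) : ℂ)
    * ((1 / Real.sqrt (2 * Real.pi) : ℝ) : ℂ)
    * Complex.exp (Complex.I * m * θ)

open intervalIntegral Real

noncomputable def besselJd (m : ℤ) (x : ℝ) : ℝ :=
  (1 / Real.pi) * ∫ τ in (0:ℝ)..Real.pi, Real.sin τ * Real.sin (m * τ - x * Real.sin τ)

noncomputable def besselJdd (m : ℤ) (x : ℝ) : ℝ :=
  -(1 / Real.pi) * ∫ τ in (0:ℝ)..Real.pi, Real.sin τ ^ 2 * Real.cos (m * τ - x * Real.sin τ)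

lemma besselJ_def (m : ℤ) (x : ℝ) : besselJ m x  = (1 / Real.pi) * ∫ τ in (0:ℝ)..Real.pi, Real.cos (m * τ - x * Real.sin τ) := rfl
lemma besselJd_def (m : ℤ) (x : ℝ) : besselJd m x = (1 / Real.pi) * ∫ τ in (0:ℝ)..Real.pi, Real.sin τ * Real.sin (m * τ - x * Real.sin τ) := rfl
lemma besselJdd_def (m : ℤ) (x : ℝ) : besselJdd m x = -(1 / Real.pi) * ∫ τ in (0:ℝ)..Real.pi, Real.sin τ ^ 2 * Real.cos (m * τ - x * Real.sin τ) := rfl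

lemma besselJd_zero_zero : besselJd 0 0 = 0 := by
  rw [besselJd_def]
  simp

attribute [irreducible] besselJ besselJd besselJdd

lemma hasDerivAt_besselJ (m : ℤ) (x : ℝ) : HasDerivAt (besselJ m) (besselJd m x) x := by
  have key : HasDerivAt (fun y => ∫ τ in (0:ℝ)..Real.pi, Real.cos (m * τ - y * Real.sin τ))
      (∫ τ in (0:ℝ)..Real.pi, Real.sin τ * Real.sin (m * τ - x * Real.sin τ)) x := by
    have := intervalIntegral.hasDerivAt_integral_of_dominated_loc_of_deriv_le
      (F := fun y τ => Real.cos (m * τ - y * Real.sin τ))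
      (F' := fun y τ => Real.sin τ * Real.sin (m * τ - y * Real.sin τ))
      (x₀ := x) (a := (0:ℝ)) (b := Real.pi) (bound := fun _ => 1) (μ := volume)
      (s := Set.univ) Filter.univ_mem
      ?_ ?_ ?_ ?_ ?_ ?_
    · exact this.2
    · filter_upwards with y
      exact (Continuous.aestronglyMeasurable (by fun_prop)).restrict
    · exact (Continuous.intervalIntegrable (by fun_prop) _ _)
    · exact (Continuous.aestronglyMeasurable (by fun_prop)).restrict
    · filter_upwards with τ _ y _
      calc ‖Real.sin τ * Real.sin (m * τ - y * Real.sin τ)‖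
          ≤ 1 * 1 := by
            rw [norm_mul]
            exact mul_le_mul (Real.abs_sin_le_one τ) (Real.abs_sin_le_one _)
              (norm_nonneg _) zero_le_one
        _ = 1 := one_mul 1
    · exact (Continuous.intervalIntegrable continuous_const _ _)
    · filter_upwards with τ _ y _
      have h1 : HasDerivAt (fun y : ℝ => m * τ - y * Real.sin τ) (-Real.sin τ) y := by
        simpa using ((hasDerivAt_id y).mul_const (Real.sin τ)).const_sub ((m:ℝ) * τ)
      have := (Real.hasDerivAt_cos (m * τ - y * Real.sin τ)).comp y h1
      simpa [mul_comm, Function.comp_def] using this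
  unfold besselJ besselJd
  simpa using key.const_mul (1 / Real.pi)

lemma hasDerivAt_besselJd (m : ℤ) (x : ℝ) : HasDerivAt (besselJd m) (besselJdd m x) x := by
  have key : HasDerivAt (fun y => ∫ τ in (0:ℝ)..Real.pi, Real.sin τ * Real.sin (m * τ - y * Real.sin τ))
      (∫ τ in (0:ℝ)..Real.pi, -(Real.sin τ ^ 2 * Real.cos (m * τ - x * Real.sin τ))) x := by
    have := intervalIntegral.hasDerivAt_integral_of_dominated_loc_of_deriv_le
      (F := fun y τ => Real.sin τ * Real.sin (m * τ - y * Real.sin τ))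
      (F' := fun y τ => -(Real.sin τ ^ 2 * Real.cos (m * τ - y * Real.sin τ)))
      (x₀ := x) (a := (0:ℝ)) (b := Real.pi) (bound := fun _ => 1) (μ := volume)
      (s := Set.univ) Filter.univ_mem
      ?_ ?_ ?_ ?_ ?_ ?_
    · exact this.2
    · filter_upwards with y
      exact (Continuous.aestronglyMeasurable (by fun_prop)).restrict
    · exact (Continuous.intervalIntegrable (by fun_prop) _ _)
    · exact (Continuous.aestronglyMeasurable (by fun_prop)).restrict
    · filter_upwards with τ _ y _
      have h1 : |Real.sin τ ^ 2| ≤ 1 := by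
        rw [abs_of_nonneg (sq_nonneg _)]
        exact sin_sq_le_one τ
      calc ‖-(Real.sin τ ^ 2 * Real.cos (m * τ - y * Real.sin τ))‖
          ≤ 1 * 1 := by
            rw [norm_neg, norm_mul]
            exact mul_le_mul h1 (Real.abs_cos_le_one _) (norm_nonneg _) zero_le_one
        _ = 1 := one_mul 1
    · exact (Continuous.intervalIntegrable continuous_const _ _)
    · filter_upwards with τ _ y _
      have h1 : HasDerivAt (fun y : ℝ => m * τ - y * Real.sin τ) (-Real.sin τ) y := by
        simpa using ((hasDerivAt_id y).mul_const (Real.sin τ)).const_sub ((m:ℝ) * τ)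
      have := ((Real.hasDerivAt_sin (m * τ - y * Real.sin τ)).comp y h1).const_mul (Real.sin τ)
      refine this.congr_deriv ?_; symm
      ring
  have h2 := key.const_mul (1 / Real.pi)
  unfold besselJd besselJdd
  simp only [intervalIntegral.integral_neg] at h2
  simpa [neg_mul, mul_neg] using h2




lemma besselJ_ode (m : ℤ) (x : ℝ) :
    x ^ 2 * besselJdd m x + x * besselJd m x + (x ^ 2 - (m:ℝ) ^ 2) * besselJ m x = 0 := by
  have hd : ∀ τ : ℝ, HasDerivAt
      (fun τ : ℝ => -((x * Real.cos τ + m) * Real.sin (m * τ - x * Real.sin τ)))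
      (x ^ 2 * -(Real.sin τ ^ 2 * Real.cos (m * τ - x * Real.sin τ))
        + x * (Real.sin τ * Real.sin (m * τ - x * Real.sin τ))
        + (x ^ 2 - (m:ℝ) ^ 2) * Real.cos (m * τ - x * Real.sin τ)) τ := by
    intro τ
    have h1 : HasDerivAt (fun τ : ℝ => (m:ℝ) * τ - x * Real.sin τ)
        ((m:ℝ) - x * Real.cos τ) τ := by
      simpa [Pi.sub_def] using ((hasDerivAt_id τ).const_mul (m:ℝ)).sub ((Real.hasDerivAt_sin τ).const_mul x)
    have h2 : HasDerivAt (fun τ : ℝ => Real.sin ((m:ℝ) * τ - x * Real.sin τ))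
        (Real.cos ((m:ℝ) * τ - x * Real.sin τ) * ((m:ℝ) - x * Real.cos τ)) τ :=
      (Real.hasDerivAt_sin _).comp τ h1
    have h3 : HasDerivAt (fun τ : ℝ => x * Real.cos τ + (m:ℝ)) (-(x * Real.sin τ)) τ := by
      simpa using ((Real.hasDerivAt_cos τ).const_mul x).add_const (m:ℝ)
    have h4 := (h3.mul h2).neg
    refine h4.congr_deriv ?_; symm
    have h5 := Real.sin_sq_add_cos_sq τ
    linear_combination (-(x ^ 2 * Real.cos ((m:ℝ) * τ - x * Real.sin τ))) * h5
  have hint : (∫ τ in (0:ℝ)..Real.pi,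
      (x ^ 2 * -(Real.sin τ ^ 2 * Real.cos (m * τ - x * Real.sin τ))
        + x * (Real.sin τ * Real.sin (m * τ - x * Real.sin τ))
        + (x ^ 2 - (m:ℝ) ^ 2) * Real.cos (m * τ - x * Real.sin τ))) = 0 := by
    rw [intervalIntegral.integral_eq_sub_of_hasDerivAt (fun τ _ => hd τ)
      ((Continuous.intervalIntegrable (by fun_prop) _ _))]
    have hpi : Real.sin ((m:ℝ) * Real.pi - x * Real.sin Real.pi) = 0 := by
      rw [Real.sin_pi]
      simpa using Real.sin_int_mul_pi m
    simp [hpi]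
  have e1 : x ^ 2 * besselJdd m x + x * besselJd m x + (x ^ 2 - (m:ℝ) ^ 2) * besselJ m x
      = (1 / Real.pi) * ∫ τ in (0:ℝ)..Real.pi,
        (x ^ 2 * -(Real.sin τ ^ 2 * Real.cos (m * τ - x * Real.sin τ))
          + x * (Real.sin τ * Real.sin (m * τ - x * Real.sin τ))
          + (x ^ 2 - (m:ℝ) ^ 2) * Real.cos (m * τ - x * Real.sin τ)) := by
    rw [besselJ_def, besselJd_def, besselJdd_def]
    rw [intervalIntegral.integral_add, intervalIntegral.integral_add,
      intervalIntegral.integral_const_mul, intervalIntegral.integral_const_mul,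
      intervalIntegral.integral_const_mul, intervalIntegral.integral_neg]
    · ring
    · exact Continuous.intervalIntegrable (by fun_prop) _ _
    · exact Continuous.intervalIntegrable (by fun_prop) _ _
    · exact Continuous.intervalIntegrable (by fun_prop) _ _
    · exact Continuous.intervalIntegrable (by fun_prop) _ _
  rw [e1, hint, mul_zero]

lemma besselJ_recur_sub (m : ℤ) (x : ℝ) :
    besselJ (m - 1) x - besselJ (m + 1) x = 2 * besselJd m x := by
  rw [besselJ_def, besselJ_def, besselJd_def, ← mul_sub, ← intervalIntegral.integral_sub
    (Continuous.intervalIntegrable (by fun_prop) _ _)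
    (Continuous.intervalIntegrable (by fun_prop) _ _)]
  rw [show (2:ℝ) * ((1 / Real.pi) * ∫ τ in (0:ℝ)..Real.pi,
      Real.sin τ * Real.sin (m * τ - x * Real.sin τ))
    = (1 / Real.pi) * ∫ τ in (0:ℝ)..Real.pi,
      2 * (Real.sin τ * Real.sin (m * τ - x * Real.sin τ)) by
      rw [intervalIntegral.integral_const_mul]; ring]
  congr 1
  apply intervalIntegral.integral_congr
  intro τ _
  push_cast
  rw [show ((m:ℝ) - 1) * τ - x * Real.sin τ = ((m:ℝ) * τ - x * Real.sin τ) - τ by ring,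
    show ((m:ℝ) + 1) * τ - x * Real.sin τ = ((m:ℝ) * τ - x * Real.sin τ) + τ by ring,
    Real.cos_sub, Real.cos_add]
  ring

lemma besselJ_recur_add (m : ℤ) (x : ℝ) (hx : x ≠ 0) :
    besselJ (m - 1) x + besselJ (m + 1) x = 2 * m / x * besselJ m x := by
  have key : x * besselJ (m - 1) x + x * besselJ (m + 1) x - 2 * m * besselJ m x = 0 := by
    have hd : ∀ τ : ℝ, HasDerivAt
        (fun τ : ℝ => -(2 * Real.sin ((m:ℝ) * τ - x * Real.sin τ)))
        (x * Real.cos (((m:ℝ) - 1) * τ - x * Real.sin τ)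
          + x * Real.cos (((m:ℝ) + 1) * τ - x * Real.sin τ)
          - 2 * (m:ℝ) * Real.cos ((m:ℝ) * τ - x * Real.sin τ)) τ := by
      intro τ
      have h1 : HasDerivAt (fun τ : ℝ => (m:ℝ) * τ - x * Real.sin τ)
          ((m:ℝ) - x * Real.cos τ) τ := by
        simpa [Pi.sub_def] using ((hasDerivAt_id τ).const_mul (m:ℝ)).sub ((Real.hasDerivAt_sin τ).const_mul x)
      have h2 := (((Real.hasDerivAt_sin _).comp τ h1).const_mul 2).neg
      refine h2.congr_deriv ?_; symm
      rw [show ((m:ℝ) - 1) * τ - x * Real.sin τ = ((m:ℝ) * τ - x * Real.sin τ) - τ by ring,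
        show ((m:ℝ) + 1) * τ - x * Real.sin τ = ((m:ℝ) * τ - x * Real.sin τ) + τ by ring,
        Real.cos_sub, Real.cos_add]
      ring
    have hint : (∫ τ in (0:ℝ)..Real.pi,
        (x * Real.cos (((m:ℝ) - 1) * τ - x * Real.sin τ)
          + x * Real.cos (((m:ℝ) + 1) * τ - x * Real.sin τ)
          - 2 * (m:ℝ) * Real.cos ((m:ℝ) * τ - x * Real.sin τ))) = 0 := by
      rw [intervalIntegral.integral_eq_sub_of_hasDerivAt (fun τ _ => hd τ)
        ((Continuous.intervalIntegrable (by fun_prop) _ _))]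
      have hpi : Real.sin ((m:ℝ) * Real.pi - x * Real.sin Real.pi) = 0 := by
        rw [Real.sin_pi]
        simpa using Real.sin_int_mul_pi m
      simp [hpi]
    have e1 : x * besselJ (m - 1) x + x * besselJ (m + 1) x - 2 * m * besselJ m x
        = (1 / Real.pi) * ∫ τ in (0:ℝ)..Real.pi,
          (x * Real.cos (((m:ℝ) - 1) * τ - x * Real.sin τ)
            + x * Real.cos (((m:ℝ) + 1) * τ - x * Real.sin τ)
            - 2 * (m:ℝ) * Real.cos ((m:ℝ) * τ - x * Real.sin τ)) := by
      rw [besselJ_def, besselJ_def, besselJ_def]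
      rw [intervalIntegral.integral_sub, intervalIntegral.integral_add,
        intervalIntegral.integral_const_mul, intervalIntegral.integral_const_mul,
        intervalIntegral.integral_const_mul]
      · push_cast
        ring
      · exact Continuous.intervalIntegrable (by fun_prop) _ _
      · exact Continuous.intervalIntegrable (by fun_prop) _ _
      · exact Continuous.intervalIntegrable (by fun_prop) _ _
      · exact Continuous.intervalIntegrable (by fun_prop) _ _
    rw [e1, hint, mul_zero]
  field_simp
  linarith [key]

lemma besselJd_eq_neg_succ (m : ℤ) (x : ℝ) (hx : x ≠ 0) (h : besselJ m x = 0) :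
    besselJd m x = - besselJ (m + 1) x := by
  have h1 := besselJ_recur_sub m x
  have h2 := besselJ_recur_add m x hx
  rw [h, mul_zero] at h2
  linarith


lemma continuous_besselJ (m : ℤ) : Continuous (besselJ m) :=
  continuous_iff_continuousAt.2 fun x => (hasDerivAt_besselJ m x).continuousAt

lemma continuous_besselJd (m : ℤ) : Continuous (besselJd m) :=
  continuous_iff_continuousAt.2 fun x => (hasDerivAt_besselJd m x).continuousAt

lemma besselJ_zero_sq (m : ℤ) : (m:ℝ) ^ 2 * besselJ m 0 = 0 := by
  have h := besselJ_ode m 0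
  ring_nf at h ⊢
  linarith

section radial
variable {m : ℤ} {za zb A : ℝ}

lemma hasDerivAt_comp_besselJ (m : ℤ) (c r : ℝ) :
    HasDerivAt (fun r => besselJ m (c * r)) (c * besselJd m (c * r)) r := by
  have := (hasDerivAt_besselJ m (c * r)).comp r ((hasDerivAt_id r).const_mul c)
  simpa [mul_comm, Function.comp_def] using this

lemma hasDerivAt_comp_besselJd (m : ℤ) (c r : ℝ) :
    HasDerivAt (fun r => besselJd m (c * r)) (c * besselJdd m (c * r)) r := by
  have := (hasDerivAt_besselJd m (c * r)).comp r ((hasDerivAt_id r).const_mul c)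
  simpa [mul_comm, Function.comp_def] using this

lemma scaled_ode (m : ℤ) (c r : ℝ) :
    r ^ 2 * (c ^ 2 * besselJdd m (c * r)) + r * (c * besselJd m (c * r))
      + (c ^ 2 * r ^ 2 - (m:ℝ) ^ 2) * besselJ m (c * r) = 0 := by
  have := besselJ_ode m (c * r)
  nlinarith [this]

lemma radial_norm (m : ℤ) (hz : 0 < za) (ha : 0 < A) (hJ : besselJ m za = 0) :
    ∫ r in (0:ℝ)..A, besselJ m (za * r / A) ^ 2 * r
      = A ^ 2 / 2 * besselJ (m + 1) za ^ 2 := by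
  set c := za / A with hc
  have hc0 : c ≠ 0 := by positivity
  have hF : ∀ r : ℝ, HasDerivAt
      (fun r => r ^ 2 * (c * besselJd m (c * r)) ^ 2
        + (c ^ 2 * r ^ 2 - (m:ℝ) ^ 2) * besselJ m (c * r) ^ 2)
      (2 * c ^ 2 * (besselJ m (c * r) ^ 2 * r)) r := by
    intro r
    have h1 := ((hasDerivAt_comp_besselJd m c r).const_mul c).pow 2
    have h2 := (hasDerivAt_pow 2 r).mul h1
    have h3 := (hasDerivAt_comp_besselJ m c r).pow 2
    have h4 : HasDerivAt (fun r : ℝ => c ^ 2 * r ^ 2 - (m:ℝ) ^ 2) (c ^ 2 * (2 * r)) r := by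
      simpa using ((hasDerivAt_pow 2 r).const_mul (c ^ 2)).sub_const ((m:ℝ) ^ 2)
    have h5 := h4.mul h3
    have h6 := h2.add h5
    refine h6.congr_deriv ?_; symm
    have hode := scaled_ode m c r
    simp only [Nat.cast_ofNat, pow_one, Pi.pow_apply]
    linear_combination (-(2 * c * besselJd m (c * r))) * hode
  have hFTC := intervalIntegral.integral_eq_sub_of_hasDerivAt (a := (0:ℝ)) (b := A) (f' := fun r =>
      2 * c ^ 2 * (besselJ m (c * r) ^ 2 * r)) (fun r _ => hF r)
    (Continuous.intervalIntegrable (by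
      have := continuous_besselJ m
      fun_prop) _ _)
  rw [intervalIntegral.integral_const_mul] at hFTC
  have hca : c * A = za := by rw [hc]; field_simp
  have hsq : c ^ 2 * A ^ 2 = za ^ 2 := by rw [← hca]; ring
  have hJd : besselJd m za = - besselJ (m + 1) za := besselJd_eq_neg_succ m za (ne_of_gt hz) hJ
  have hm0 : ((m:ℝ) ^ 2) * besselJ m 0 ^ 2 = 0 := by
    have h := besselJ_zero_sq m
    linear_combination besselJ m 0 * h
  rw [hca, hJ, hJd] at hFTC
  have hval : (2 : ℝ) * c ^ 2 * ∫ r in (0:ℝ)..A, besselJ m (c * r) ^ 2 * r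
      = za ^ 2 * besselJ (m + 1) za ^ 2 := by
    rw [hFTC]
    simp only [mul_zero]
    linear_combination hm0 + (besselJ (m + 1) za ^ 2) * hsq
  rw [hc] at hval
  field_simp at hval
  have hza2 : (za:ℝ) ^ 2 ≠ 0 := by positivity
  have h2 : (2:ℝ) * ∫ r in (0:ℝ)..A, besselJ m (za * r / A) ^ 2 * r
      = besselJ (m + 1) za ^ 2 * A ^ 2 := by
    apply mul_left_cancel₀ hza2
    rw [show (∫ r in (0:ℝ)..A, r * besselJ m (za * r / A) ^ 2)
      = ∫ r in (0:ℝ)..A, besselJ m (za * r / A) ^ 2 * r by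
        congr 1; funext r; ring] at hval
    rw [hval]; ring
  linarith [h2]


lemma radial_orth (m : ℤ) (hza : 0 < za) (hzb : 0 < zb) (hne : za ≠ zb) (ha : 0 < A)
    (hJa : besselJ m za = 0) (hJb : besselJ m zb = 0) :
    ∫ r in (0:ℝ)..A, besselJ m (za * r / A) * besselJ m (zb * r / A) * r = 0 := by
  set α := za / A with hα
  set β := zb / A with hβ
  have hα0 : 0 < α := by rw [hα]; positivity
  have hβ0 : 0 < β := by rw [hβ]; positivity
  have hαβ : α ≠ β := by
    rw [hα, hβ]
    exact fun h => hne (by field_simp at h; linarith)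
  have hW : ∀ r : ℝ, HasDerivAt
      (fun r => r * (α * besselJd m (α * r) * besselJ m (β * r)
        - besselJ m (α * r) * (β * besselJd m (β * r))))
      ((β ^ 2 - α ^ 2) * (besselJ m (α * r) * besselJ m (β * r) * r)) r := by
    intro r
    have h1 := ((hasDerivAt_comp_besselJd m α r).const_mul α).mul (hasDerivAt_comp_besselJ m β r)
    have h2 := (hasDerivAt_comp_besselJ m α r).mul ((hasDerivAt_comp_besselJd m β r).const_mul β)
    have h3 := (hasDerivAt_id r).mul (h1.sub h2)
    refine h3.congr_deriv ?_; symm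
    rcases eq_or_ne r 0 with hr | hr
    · subst hr
      simp only [mul_zero, zero_mul, id_eq, one_mul, add_zero, zero_add, sub_zero]
      rcases eq_or_ne m 0 with hm | hm
      · subst hm
        simp [besselJd_zero_zero]
      · have hJ0 : besselJ m 0 = 0 := by
          have h := besselJ_zero_sq m
          have hm2 : ((m:ℝ)) ^ 2 ≠ 0 := by
            have : (m:ℝ) ≠ 0 := Int.cast_ne_zero.2 hm
            positivity
          exact (mul_eq_zero.1 h).resolve_left hm2
        simp [hJ0]
    · apply mul_left_cancel₀ hr
      simp only [id_eq, one_mul, Pi.mul_apply, Pi.sub_apply]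
      linear_combination (besselJ m (α * r)) * (scaled_ode m β r)
        - (besselJ m (β * r)) * (scaled_ode m α r)
  have hFTC := intervalIntegral.integral_eq_sub_of_hasDerivAt (a := (0:ℝ)) (b := A)
    (f' := fun r => (β ^ 2 - α ^ 2) * (besselJ m (α * r) * besselJ m (β * r) * r))
    (fun r _ => hW r)
    (Continuous.intervalIntegrable (by
      have := continuous_besselJ m
      fun_prop) _ _)
  rw [intervalIntegral.integral_const_mul] at hFTC
  have hcaa : α * A = za := by rw [hα]; field_simp
  have hcab : β * A = zb := by rw [hβ]; field_simp
  rw [hcaa, hcab, hJa, hJb] at hFTC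
  simp only [mul_zero, zero_mul, sub_zero, mul_zero, sub_self] at hFTC
  have hd : (β ^ 2 - α ^ 2) ≠ 0 := by
    intro h
    have : (β - α) * (β + α) = 0 := by linear_combination h
    rcases mul_eq_zero.1 this with h' | h'
    · exact hαβ (by linarith)
    · linarith
  have hint : ∫ r in (0:ℝ)..A, besselJ m (α * r) * besselJ m (β * r) * r = 0 := by
    rcases mul_eq_zero.1 hFTC with h | h
    · exact absurd h hd
    · exact h
  have hg1 : ∀ r : ℝ, α * r = za * r / A := fun r => by rw [hα]; ring
  have hg2 : ∀ r : ℝ, β * r = zb * r / A := fun r => by rw [hβ]; ring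
  have hcongr : (∫ r in (0:ℝ)..A, besselJ m (za * r / A) * besselJ m (zb * r / A) * r)
      = ∫ r in (0:ℝ)..A, besselJ m (α * r) * besselJ m (β * r) * r :=
    intervalIntegral.integral_congr (fun r _ => by simp only [← hg1 r, ← hg2 r])
  rw [hcongr]
  exact hint

end radial


lemma bessel_vanish (m : ℤ) (x₀ : ℝ) (hx : 0 < x₀) (hJ : besselJ m x₀ = 0)
    (hJd : besselJd m x₀ = 0) : ∀ t ∈ Set.Icc x₀ (x₀ + 1), besselJ m t = 0 := by
  set K : ℝ := ((x₀ + 1) + ((x₀ + 1) ^ 2 + (m:ℝ) ^ 2)) / x₀ ^ 2 + 1 with hK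
  have hKpos : 1 ≤ K := by
    have h : 0 ≤ ((x₀ + 1) + ((x₀ + 1) ^ 2 + (m:ℝ) ^ 2)) / x₀ ^ 2 := by positivity
    rw [hK]
    linarith
  set f : ℝ → ℝ × ℝ := fun t => (besselJ m t, besselJd m t) with hf
  have hf' : ∀ t, HasDerivAt f (besselJd m t, besselJdd m t) t := fun t =>
    (hasDerivAt_besselJ m t).prodMk (hasDerivAt_besselJd m t)
  have hcont : ContinuousOn f (Set.Icc x₀ (x₀ + 1)) :=
    (continuous_iff_continuousAt.2 fun t => (hf' t).continuousAt).continuousOn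
  have hbound : ∀ t ∈ Set.Ico x₀ (x₀ + 1),
      ‖(besselJd m t, besselJdd m t)‖ ≤ K * ‖f t‖ + 0 := by
    intro t ht
    have ht0 : x₀ ≤ t := ht.1
    have ht1 : t ≤ x₀ + 1 := le_of_lt ht.2
    have htpos : 0 < t := lt_of_lt_of_le hx ht0
    rw [Prod.norm_def, Prod.norm_def]
    simp only [Real.norm_eq_abs, hf]
    set J := |besselJ m t| with hJabs
    set Jd := |besselJd m t| with hJdabs
    have hJn : 0 ≤ J := abs_nonneg _
    have hJdn : 0 ≤ Jd := abs_nonneg _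
    have hN1 : J ≤ max J Jd := le_max_left _ _
    have hN2 : Jd ≤ max J Jd := le_max_right _ _
    have hNn : 0 ≤ max J Jd := le_trans hJn hN1
    rw [add_zero]
    apply max_le
    · nlinarith
    · -- |Jdd| * t^2 ≤ t * Jd + (t^2 + m^2) * J
      have hode : besselJdd m t * t ^ 2 = -(t * besselJd m t) - (t ^ 2 - (m:ℝ) ^ 2) * besselJ m t := by
        linear_combination besselJ_ode m t
      have habs : |besselJdd m t| * t ^ 2 ≤ t * Jd + (t ^ 2 + (m:ℝ) ^ 2) * J := by
        have h1 : |besselJdd m t| * t ^ 2 = |besselJdd m t * t ^ 2| := by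
          rw [abs_mul, abs_of_nonneg (sq_nonneg t)]
        rw [h1, hode]
        calc |-(t * besselJd m t) - (t ^ 2 - (m:ℝ) ^ 2) * besselJ m t|
            ≤ |t * besselJd m t| + |(t ^ 2 - (m:ℝ) ^ 2) * besselJ m t| := by
              rw [sub_eq_add_neg, ← neg_add]
              rw [abs_neg]
              exact abs_add_le _ _
          _ ≤ t * Jd + (t ^ 2 + (m:ℝ) ^ 2) * J := by
              rw [abs_mul, abs_mul]
              gcongr
              · rw [abs_of_pos htpos]
              · calc |t ^ 2 - (m:ℝ) ^ 2| ≤ |t ^ 2| + |(m:ℝ) ^ 2| := abs_sub _ _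
                  _ = t ^ 2 + (m:ℝ) ^ 2 := by
                    rw [abs_of_nonneg (sq_nonneg _), abs_of_nonneg (sq_nonneg _)]
      -- now conclude |Jdd| ≤ K * max J Jd
      have hx2 : (0:ℝ) < x₀ ^ 2 := by positivity
      have ht2 : x₀ ^ 2 ≤ t ^ 2 := by nlinarith
      have hrhs : t * Jd + (t ^ 2 + (m:ℝ) ^ 2) * J
          ≤ ((x₀ + 1) + ((x₀ + 1) ^ 2 + (m:ℝ) ^ 2)) * max J Jd := by
        have h2 : t ^ 2 ≤ (x₀ + 1) ^ 2 := by nlinarith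
        nlinarith [hN1, hN2, hNn, sq_nonneg (m:ℝ)]
      have hKx : ((x₀ + 1) + ((x₀ + 1) ^ 2 + (m:ℝ) ^ 2)) ≤ K * x₀ ^ 2 := by
        rw [hK]
        rw [add_mul, div_mul_cancel₀ _ (ne_of_gt hx2)]
        nlinarith
      nlinarith [abs_nonneg (besselJdd m t), mul_le_mul_of_nonneg_left ht2 (mul_nonneg (le_trans zero_le_one hKpos) hNn)]
  have hinit : ‖f x₀‖ ≤ 0 := by
    rw [hf]
    simp [hJ, hJd, Prod.norm_def]
  have hmain := norm_le_gronwallBound_of_norm_deriv_right_le (f := f)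
    (f' := fun t => (besselJd m t, besselJdd m t)) (a := x₀) (b := x₀ + 1) (δ := 0) (K := K)
    (ε := 0) hcont (fun t _ => (hf' t).hasDerivWithinAt) hinit hbound
  intro t ht
  have := hmain t ht
  rw [gronwallBound_ε0, zero_mul] at this
  have hnorm : ‖f t‖ = 0 := le_antisymm this (norm_nonneg _)
  have : besselJ m t = 0 := by
    have h1 : ‖besselJ m t‖ ≤ ‖f t‖ := by
      rw [Prod.norm_def]
      exact le_max_left _ _
    rw [hnorm] at h1
    exact norm_le_zero_iff.1 h1
  exact this

lemma theta_integral (k : ℤ) :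
    (∫ θ in (0:ℝ)..(2 * Real.pi), Complex.exp (Complex.I * k * θ))
      = if k = 0 then ((2 * Real.pi : ℝ) : ℂ) else 0 := by
  rcases eq_or_ne k 0 with hk | hk
  · subst hk
    simp [Complex.exp_zero]
  · rw [if_neg hk]
    have hc : Complex.I * (k : ℂ) ≠ 0 := by
      simp [Complex.I_ne_zero, Complex.ext_iff]
      exact_mod_cast hk
    have := integral_exp_mul_complex (a := (0:ℝ)) (b := 2 * Real.pi) hc
    rw [this]
    have h1 : Complex.I * (k:ℂ) * ((2 * Real.pi : ℝ) : ℂ) = (k : ℂ) * (2 * (Real.pi:ℂ) * Complex.I) := by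
      push_cast; ring
    rw [h1, Complex.exp_int_mul_two_pi_mul_I]
    simp

lemma inner_eval (x y : ℝ) (m m' : ℤ) :
    (∫ θ in (0:ℝ)..(2 * Real.pi),
      ((x:ℂ) * ((1 / Real.sqrt (2 * Real.pi) : ℝ) : ℂ) * Complex.exp (Complex.I * m * θ))
        * (starRingEnd ℂ) ((y:ℂ) * ((1 / Real.sqrt (2 * Real.pi) : ℝ) : ℂ)
            * Complex.exp (Complex.I * m' * θ)))
      = if m = m' then ((x * y : ℝ) : ℂ) else 0 := by
  have h2pi : (0:ℝ) < 2 * Real.pi := by positivity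
  have hconst : ((1 / Real.sqrt (2 * Real.pi) : ℝ) : ℂ) * ((1 / Real.sqrt (2 * Real.pi) : ℝ) : ℂ)
      = ((1 / (2 * Real.pi) : ℝ) : ℂ) := by
    rw [← Complex.ofReal_mul]
    congr 1
    rw [div_mul_div_comm, one_mul, Real.mul_self_sqrt (le_of_lt h2pi)]
  have hptw : ∀ θ : ℝ,
      ((x:ℂ) * ((1 / Real.sqrt (2 * Real.pi) : ℝ) : ℂ) * Complex.exp (Complex.I * m * θ))
        * (starRingEnd ℂ) ((y:ℂ) * ((1 / Real.sqrt (2 * Real.pi) : ℝ) : ℂ)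
            * Complex.exp (Complex.I * m' * θ))
      = ((x * y / (2 * Real.pi) : ℝ) : ℂ) * Complex.exp (Complex.I * (m - m') * θ) := by
    intro θ
    have hconj : (starRingEnd ℂ) (Complex.exp (Complex.I * m' * θ))
        = Complex.exp (-(Complex.I * m' * θ)) := by
      rw [← Complex.exp_conj]
      congr 1
      simp [Complex.ext_iff]
    simp only [map_mul, Complex.conj_ofReal, hconj]
    rw [show ((x:ℂ) * ((1 / Real.sqrt (2 * Real.pi) : ℝ) : ℂ) * Complex.exp (Complex.I * m * θ))
        * ((y:ℂ) * ((1 / Real.sqrt (2 * Real.pi) : ℝ) : ℂ) * Complex.exp (-(Complex.I * m' * θ)))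
      = (x:ℂ) * (y:ℂ) * (((1 / Real.sqrt (2 * Real.pi) : ℝ) : ℂ) * ((1 / Real.sqrt (2 * Real.pi) : ℝ) : ℂ))
        * (Complex.exp (Complex.I * m * θ) * Complex.exp (-(Complex.I * m' * θ))) by ring,
      hconst, ← Complex.exp_add]
    have harg : Complex.I * m * θ + -(Complex.I * m' * θ) = Complex.I * ((m:ℂ) - m') * θ := by ring
    rw [harg]
    push_cast
    ring
  rw [intervalIntegral.integral_congr (g := fun θ : ℝ =>
      ((x * y / (2 * Real.pi) : ℝ) : ℂ) * Complex.exp (Complex.I * ((m:ℂ) - (m':ℂ)) * θ))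
      (fun θ _ => hptw θ)]
  rw [intervalIntegral.integral_const_mul]
  rw [show (fun θ : ℝ => Complex.exp (Complex.I * ((m:ℂ) - (m':ℂ)) * (θ:ℂ)))
      = fun θ : ℝ => Complex.exp (Complex.I * ((m - m' : ℤ) : ℂ) * (θ:ℂ)) by push_cast; rfl]
  rw [theta_integral (m - m')]
  rcases eq_or_ne m m' with h | h
  · subst h
    rw [if_pos (sub_self m), if_pos rfl]
    rw [← Complex.ofReal_mul]
    congr 1
    field_simp
  · rw [if_neg (sub_ne_zero.2 h), if_neg h, mul_zero]

theorem polarHarmonic_orthonormal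
    (a : ℝ) (ha : 0 < a) (z : ℤ → ℕ → ℝ)
    (hmono : ∀ m, StrictMono (z m)) (hpos : ∀ m n, 0 < z m n)
    (hzero : ∀ m n, besselJ m (z m n) = 0)
    (hall : ∀ m x, 0 < x → besselJ m x = 0 → ∃ n, x = z m n)
    (m m' : ℤ) (n n' : ℕ) :
    (∫ r in (0:ℝ)..a, (∫ θ in (0:ℝ)..(2 * Real.pi),
        polarHarmonic a z m n r θ
          * (starRingEnd ℂ) (polarHarmonic a z m' n' r θ)) * (r : ℂ))
      = if n = n' ∧ m = m' then 1 else 0 := by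
  have hnv : ∀ (mm : ℤ) (nn : ℕ), besselJ (mm + 1) (z mm nn) ≠ 0 := by
    intro mm nn h
    have hJd : besselJd mm (z mm nn) = 0 := by
      rw [besselJd_eq_neg_succ mm _ (ne_of_gt (hpos mm nn)) (hzero mm nn), h, neg_zero]
    have hvan := bessel_vanish mm (z mm nn) (hpos mm nn) (hzero mm nn) hJd
    have hsub : Set.Ioo (z mm nn) (z mm nn + 1) ⊆ Set.range (z mm) := by
      intro x hx
      obtain ⟨k, hk⟩ := hall mm x (lt_trans (hpos mm nn) hx.1)
        (hvan x ⟨le_of_lt hx.1, le_of_lt hx.2⟩)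
      exact ⟨k, hk.symm⟩
    have hcnt : (Set.Ioo (z mm nn) (z mm nn + 1)).Countable :=
      (Set.countable_range _).mono hsub
    have hm0 := hcnt.measure_zero (volume : Measure ℝ)
    rw [Real.volume_Ioo] at hm0
    rw [ENNReal.ofReal_eq_zero] at hm0
    linarith
  have hinner : ∀ r : ℝ, (∫ θ in (0:ℝ)..(2 * Real.pi),
      polarHarmonic a z m n r θ * (starRingEnd ℂ) (polarHarmonic a z m' n' r θ))
      = if m = m' then
          ((besselJ m (z m n * r / a) / Real.sqrt (a ^ 2 / 2 * besselJ (m + 1) (z m n) ^ 2)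
            * (besselJ m' (z m' n' * r / a)
                / Real.sqrt (a ^ 2 / 2 * besselJ (m' + 1) (z m' n') ^ 2)) : ℝ) : ℂ)
        else 0 := by
    intro r
    unfold polarHarmonic
    exact inner_eval _ _ m m'
  rcases eq_or_ne m m' with hm | hm
  · subst hm
    simp only [eq_self_iff_true, and_true]
    set N1 : ℝ := Real.sqrt (a ^ 2 / 2 * besselJ (m + 1) (z m n) ^ 2) with hN1def
    set N2 : ℝ := Real.sqrt (a ^ 2 / 2 * besselJ (m + 1) (z m n') ^ 2) with hN2def
    have hb1 : besselJ (m + 1) (z m n) ≠ 0 := hnv m n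
    have hb2 : besselJ (m + 1) (z m n') ≠ 0 := hnv m n'
    have hN1 : 0 < N1 := by rw [hN1def]; apply Real.sqrt_pos.2; positivity
    have hN2 : 0 < N2 := by rw [hN2def]; apply Real.sqrt_pos.2; positivity
    rw [intervalIntegral.integral_congr (g := fun r : ℝ =>
        ((besselJ m (z m n * r / a) / N1 * (besselJ m (z m n' * r / a) / N2) * r : ℝ) : ℂ))
      (fun r _ => by rw [hinner r, if_pos rfl]; push_cast; ring)]
    rw [intervalIntegral.integral_ofReal]
    have hreal : (∫ r in (0:ℝ)..a,
        besselJ m (z m n * r / a) / N1 * (besselJ m (z m n' * r / a) / N2) * r)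
        = if n = n' then 1 else 0 := by
      rw [intervalIntegral.integral_congr (g := fun r : ℝ =>
          (N1 * N2)⁻¹ * (besselJ m (z m n * r / a) * besselJ m (z m n' * r / a) * r))
        (fun r _ => by field_simp; try ring)]
      rw [intervalIntegral.integral_const_mul]
      rcases eq_or_ne n n' with hn | hn
      · subst hn
        rw [if_pos rfl]
        rw [intervalIntegral.integral_congr (g := fun r : ℝ =>
            besselJ m (z m n * r / a) ^ 2 * r)
          (fun r _ => by simp only [sq])]
        rw [radial_norm m (hpos m n) ha (hzero m n)]
        rw [hN1def, Real.mul_self_sqrt (by positivity)]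
        rw [inv_mul_cancel₀ (by positivity)]
      · rw [if_neg hn]
        rw [radial_orth m (hpos m n) (hpos m n')
          (fun h => hn ((hmono m).injective h)) ha (hzero m n) (hzero m n'), mul_zero]
    rw [hreal]
    split_ifs <;> simp
  · rw [intervalIntegral.integral_congr (g := fun _ : ℝ => (0:ℂ))
      (fun r _ => by rw [hinner r, if_neg hm, zero_mul])]
    rw [intervalIntegral.integral_zero, if_neg (by tauto)]
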